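/- arXiv:2107.08686 — 2 statements merged into one kernel-verified Lean document; each statement's English description precedes it below -/
import Mathlib

section
/- Suppose f : W × Z → ℝ is L-Lipschitz in its first argument and the population risk F satisfies the quadratic growth (QG) condition on W with parameter μ > 0. Then the generalized Bernstein condition holds with parameter 2L²/μ: for every w ∈ W there exists a minimizer w* of F in W (namely a Euclidean projection of w onto the set of minimizers of F) such that E_{z∼ρ}[(f(w,z) − f(w*,z))²] ≤ (2L²/μ)·(F(w) − F(w*)). -/
open MeasureTheory Finset
open scoped ENNReal NNReal

noncomputable section

universe u

/-- `ℝ^d` with the Euclidean structure. -/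
abbrev Vec (d : ℕ) : Type := EuclideanSpace ℝ (Fin d)

/-- Population risk `F(w) = E_{z ∼ ρ} [f(w,z)]`. -/
def popRisk {d : ℕ} {Z : Type u} [MeasurableSpace Z] (ρ : Measure Z)
    (f : Vec d → Z → ℝ) (w : Vec d) : ℝ :=
  ∫ z, f w z ∂ρ

/-- Empirical risk `F_S(w) = (1/n) ∑_{i=1}^n f(w, z_i)`. -/
def empRisk {d n : ℕ} {Z : Type u} (f : Vec d → Z → ℝ) (S : Fin n → Z) (w : Vec d) : ℝ :=
  (∑ i, f w (S i)) / (n : ℝ)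

/-- Quadratic growth condition on `W` with parameter `μ`:  for every `w ∈ W` there is a
(Euclidean-projection) minimizer `p` of `g` on `W` with `g w - g p ≥ (μ/2)‖w - p‖²`.
(Since all minimizers have the same value, this is equivalent to the formulation with the
closest minimizer `π(w)`.) -/
def QuadGrowthOn {d : ℕ} (g : Vec d → ℝ) (W : Set (Vec d)) (μ : ℝ) : Prop :=
  ∀ w ∈ W, ∃ p ∈ W, IsMinOn g W p ∧ μ / 2 * ‖w - p‖ ^ 2 ≤ g w - g p

/-- Polyak–Łojasiewicz condition with parameter `μ`: `g(w) - inf g ≤ ‖∇g(w)‖²/(2μ)` for all `w`. -/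
def PLCond {d : ℕ} (g : Vec d → ℝ) (μ : ℝ) : Prop :=
  ∀ w, g w - (⨅ v, g v) ≤ 1 / (2 * μ) * ‖gradient g w‖ ^ 2

/-- Polyak–Łojasiewicz condition on a set `W`. -/
def PLOnSet {d : ℕ} (g : Vec d → ℝ) (W : Set (Vec d)) (μ : ℝ) : Prop :=
  ∀ w ∈ W, g w - sInf (g '' W) ≤ 1 / (2 * μ) * ‖gradient g w‖ ^ 2

/-- SGD iterates: `w₁ = 0` and `w_{t+1} = w_t - η_t ∇f(w_t, z_{j_t})` for `t ≥ 1`. -/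
def sgd {d n : ℕ} {Z : Type u} (f : Vec d → Z → ℝ) (S : Fin n → Z)
    (η : ℕ → ℝ) (j : ℕ → Fin n) : ℕ → Vec d
  | 0 => 0
  | 1 => 0
  | t + 2 =>
      sgd f S η j (t + 1) -
        η (t + 1) • gradient (fun w => f w (S (j (t + 1)))) (sgd f S η j (t + 1))

/-- The indices `j_0, j_1, j_2, …` are drawn independently and uniformly from `{1,…,n}`:
cylinder-set characterization of the infinite product of uniform measures on `Fin n`. -/
def IsUniformIndexMeasure {n : ℕ} (μJ : Measure (ℕ → Fin n)) : Prop :=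
  IsProbabilityMeasure μJ ∧
    ∀ (s : Finset ℕ) (g : ℕ → Fin n),
      μJ {j | ∀ t ∈ s, j t = g t} = (1 / (n : ℝ≥0∞)) ^ s.card

/-- Lipschitzness plus quadratic growth of the population risk implies
the generalized Bernstein condition with parameter `2L²/μ`. -/
theorem statement11 {d : ℕ} {Z : Type u} [MeasurableSpace Z] (ρ : Measure Z)
    [IsProbabilityMeasure ρ] (W : Set (Vec d)) (hW : IsClosed W)
    (f : Vec d → Z → ℝ) (L μ : ℝ) (hL : 0 < L) (hμ : 0 < μ)
    (hInt : ∀ w, Integrable (f w) ρ)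
    (hInt2 : ∀ w v, Integrable (fun z => (f w z - f v z) ^ 2) ρ)
    (hLip : ∀ z, ∀ w₁ ∈ W, ∀ w₂ ∈ W, |f w₁ z - f w₂ z| ≤ L * ‖w₁ - w₂‖)
    (hQG : QuadGrowthOn (popRisk ρ f) W μ) :
    ∀ w ∈ W, ∃ p ∈ W, IsMinOn (popRisk ρ f) W p ∧
      (∫ z, (f w z - f p z) ^ 2 ∂ρ) ≤ 2 * L ^ 2 / μ * (popRisk ρ f w - popRisk ρ f p) := by
  intro w hw
  obtain ⟨p, hpW, hmin, hqg⟩ := hQG w hw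
  refine ⟨p, hpW, hmin, ?_⟩
  have h1 : (∫ z, (f w z - f p z) ^ 2 ∂ρ) ≤ ∫ _z, (L * ‖w - p‖) ^ 2 ∂ρ := by
    refine integral_mono (hInt2 w p) (integrable_const _) fun z => ?_
    have := hLip z w hw p hpW
    have h0 := abs_nonneg (f w z - f p z)
    calc (f w z - f p z) ^ 2 = |f w z - f p z| ^ 2 := (sq_abs _).symm
      _ ≤ (L * ‖w - p‖) ^ 2 := by
          apply pow_le_pow_left₀ h0 this
  have h2 : (∫ _z, (L * ‖w - p‖) ^ 2 ∂ρ : ℝ) = (L * ‖w - p‖) ^ 2 := by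
    simp [integral_const]
  have h3 : ‖w - p‖ ^ 2 ≤ 2 / μ * (popRisk ρ f w - popRisk ρ f p) := by
    rw [div_mul_eq_mul_div, le_div_iff₀ hμ]
    nlinarith [hqg]
  calc (∫ z, (f w z - f p z) ^ 2 ∂ρ) ≤ (L * ‖w - p‖) ^ 2 := by rw [← h2]; exact h1
    _ = L ^ 2 * ‖w - p‖ ^ 2 := by ring
    _ ≤ L ^ 2 * (2 / μ * (popRisk ρ f w - popRisk ρ f p)) := by
        exact mul_le_mul_of_nonneg_left h3 (sq_nonneg L)
    _ = 2 * L ^ 2 / μ * (popRisk ρ f w - popRisk ρ f p) := by ring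

end
end

section
/- Let F : ℝ^d → ℝ be differentiable and β-smooth with a non-empty set of global minimizers W*, let F* = min F, and for each w let w* denote a Euclidean projection of w onto W*. Then: (i) if F is μ-strongly convex then F satisfies weak strong convexity with μ, i.e. F* − F(w) ≥ ∇F(w)ᵀ(w* − w) + (μ/2)‖w* − w‖² for all w; (ii) weak strong convexity with μ implies the restricted secant inequality with μ/2, i.e. ∇F(w)ᵀ(w − w*) ≥ (μ/2)‖w − w*‖²; (iii) the restricted secant inequality with μ implies the error bound with μ, i.e. ‖∇F(w)‖ ≥ μ‖w − w*‖; (iv) the error bound with μ together with β-smoothness implies the Polyak–Łojasiewicz (PL) inequality F(w) − F* ≤ (β/(2μ²))‖∇F(w)‖²; (v) the PL condition with μ (F(w) − F* ≤ (1/(2μ))‖∇F(w)‖²) implies both the quadratic growth condition F(w) − F* ≥ (μ/2)‖w − w*‖² and the error bound ‖∇F(w)‖ ≥ μ‖w − w*‖; (vi) if F is convex and satisfies quadratic growth with μ, then F(w) − F* ≤ (2/μ)‖∇F(w)‖² for all w, i.e. F satisfies PL with parameter μ/4. -/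
open MeasureTheory Finset
open scoped ENNReal NNReal

noncomputable section

universe u

/-! Parts (i)–(iv) and (vi) are first-order inequalities evaluated at the nearest minimizer
`w*`, combined with Cauchy–Schwarz, the descent lemma for a `β`-Lipschitz gradient, the gradient
inequality of a convex function, and AM-GM.

The substantial step is PL ⇒ quadratic growth, proved by an Ekeland-type argument. PL says that
`g = √(F - F*)` has gradient norm at least `√(μ/2)` wherever `g > 0`. For `c < √(μ/2)`, let `v`
minimize `g + c · dist(·, w)` over the closed ball of radius `g w / c` around `w`. If `g v > 0`,
then `v` lies in the open ball, so `g` decreases at rate at most `c` near `v`, which is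
impossible; hence `v` minimizes `F` and `c ‖w - v‖ ≤ g w`. Letting `c → √(μ/2)` gives
`(μ/2) ‖w - w*‖² ≤ F w - F*`. -/

open Filter Topology Set InnerProductSpace
open AffineMap (lineMap lineMap_apply_zero lineMap_apply_one hasDerivAt_lineMap)

section Gradient

variable {E : Type*} [NormedAddCommGroup E]

theorem HasFDerivAt.neg_mul_norm_le_apply_of_eventually_le [NormedSpace ℝ E] {g : E → ℝ}
    {g' : E →L[ℝ] ℝ} {v : E} {K : ℝ} (hg : HasFDerivAt g g' v)
    (hlow : ∀ᶠ u in 𝓝 v, g v - K * ‖u - v‖ ≤ g u) (y : E) :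
    -(K * ‖y‖) ≤ g' y := by
  have hray : Tendsto (fun t : ℝ => v + t • y) (𝓝[>] 0) (𝓝 v) := by
    have : Continuous fun t : ℝ => v + t • y := by fun_prop
    simpa using (this.tendsto 0).mono_left nhdsWithin_le_nhds
  refine ge_of_tendsto (hg.hasLineDerivAt y).tendsto_slope_zero_right ?_
  filter_upwards [hray.eventually hlow, self_mem_nhdsWithin] with t ht (htpos : 0 < t)
  rw [add_sub_cancel_left, norm_smul, Real.norm_of_nonneg htpos.le] at ht
  rw [smul_eq_mul, le_inv_mul_iff₀ htpos]
  linarith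

theorem HasFDerivAt.norm_le_of_eventually_le [NormedSpace ℝ E] {g : E → ℝ}
    {g' : E →L[ℝ] ℝ} {v : E} {K : ℝ} (hg : HasFDerivAt g g' v) (hK : 0 ≤ K)
    (hlow : ∀ᶠ u in 𝓝 v, g v - K * ‖u - v‖ ≤ g u) : ‖g'‖ ≤ K := by
  refine g'.opNorm_le_bound hK fun y => ?_
  have hy := hg.neg_mul_norm_le_apply_of_eventually_le hlow y
  have hny := hg.neg_mul_norm_le_apply_of_eventually_le hlow (-y)
  rw [map_neg, norm_neg] at hny
  rw [Real.norm_eq_abs, abs_le]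
  constructor <;> linarith

variable [InnerProductSpace ℝ E]

theorem mul_norm_le_norm_of_mul_sq_le_inner {μ : ℝ} {g x : E}
    (h : μ * ‖x‖ ^ 2 ≤ inner ℝ g x) : μ * ‖x‖ ≤ ‖g‖ := by
  rcases (norm_nonneg x).eq_or_lt with hx | hx
  · simp [← hx]
  · refine le_of_mul_le_mul_right ?_ hx
    linarith [real_inner_le_norm g x]

variable [CompleteSpace E]

theorem norm_gradient_le_of_eventually_le {g : E → ℝ} {v : E} {K : ℝ}
    (hg : DifferentiableAt ℝ g v) (hK : 0 ≤ K)
    (hlow : ∀ᶠ u in 𝓝 v, g v - K * ‖u - v‖ ≤ g u) : ‖gradient g v‖ ≤ K := by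
  rw [← (toDual ℝ E).norm_map, toDual_gradient]
  exact hg.hasFDerivAt.norm_le_of_eventually_le hK hlow

theorem IsLocalMin.gradient_eq_zero {g : E → ℝ} {v : E} (h : IsLocalMin g v) :
    gradient g v = 0 := by
  rw [gradient, h.fderiv_eq_zero, map_zero]

theorem hasDerivAt_comp_lineMap {F : E → ℝ} {x y : E} {t : ℝ}
    (hF : DifferentiableAt ℝ F (lineMap x y t)) :
    HasDerivAt (fun s : ℝ => F (lineMap x y s))
      (inner ℝ (gradient F (lineMap x y t)) (y - x)) t := by
  rw [inner_gradient_left]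
  exact hF.hasFDerivAt.comp_hasDerivAt t hasDerivAt_lineMap

theorem apply_le_add_inner_gradient_add_sq_norm {F : E → ℝ} {β : ℝ} (hF : Differentiable ℝ F)
    (hsmooth : ∀ w₁ w₂, ‖gradient F w₁ - gradient F w₂‖ ≤ β * ‖w₁ - w₂‖) (x y : E) :
    F y ≤ F x + inner ℝ (gradient F x) (y - x) + β / 2 * ‖y - x‖ ^ 2 := by
  set a := inner ℝ (gradient F x) (y - x)
  have hderiv (t : ℝ) := hasDerivAt_comp_lineMap (x := x) (y := y) (t := t) (hF _)
  have hbound : ∀ t ∈ Ico (0 : ℝ) 1,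
      inner ℝ (gradient F (lineMap x y t)) (y - x) ≤ a + β * ‖y - x‖ ^ 2 * t := by
    intro t ht
    have hlip : ‖gradient F (lineMap x y t) - gradient F x‖ ≤ β * (t * ‖y - x‖) := by
      simpa [← dist_eq_norm, dist_lineMap_left, abs_of_nonneg ht.1, dist_comm x y]
        using hsmooth (lineMap x y t) x
    calc inner ℝ (gradient F (lineMap x y t)) (y - x)
        = a + inner ℝ (gradient F (lineMap x y t) - gradient F x) (y - x) := by
          rw [inner_sub_left]; ring
      _ ≤ a + ‖gradient F (lineMap x y t) - gradient F x‖ * ‖y - x‖ := by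
          gcongr; exact real_inner_le_norm _ _
      _ ≤ a + β * (t * ‖y - x‖) * ‖y - x‖ := by gcongr
      _ = a + β * ‖y - x‖ ^ 2 * t := by ring
  have hB (t : ℝ) : HasDerivAt (fun s : ℝ => F x + a * s + β * ‖y - x‖ ^ 2 / 2 * s ^ 2)
      (a + β * ‖y - x‖ ^ 2 * t) t := by
    have hlin := ((hasDerivAt_id' t).const_mul a).const_add (F x)
    have hquad := (hasDerivAt_pow 2 t).const_mul (β * ‖y - x‖ ^ 2 / 2)
    exact (hlin.add hquad).congr_deriv (by norm_num; ring)
  have := image_le_of_deriv_right_le_deriv_boundary (a := 0) (b := 1)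
    (fun t _ => (hderiv t).continuousAt.continuousWithinAt)
    (fun t _ => (hderiv t).hasDerivWithinAt) (by simp) (by fun_prop)
    (fun t _ => (hB t).hasDerivWithinAt) hbound (right_mem_Icc.2 zero_le_one)
  simp only [lineMap_apply_one] at this
  linarith

theorem ConvexOn.add_inner_gradient_le {F : E → ℝ} (hconv : ConvexOn ℝ univ F) {x : E}
    (hF : DifferentiableAt ℝ F x) (y : E) : F x + inner ℝ (gradient F x) (y - x) ≤ F y := by
  have hline : ConvexOn ℝ univ fun t : ℝ => F (lineMap x y t) :=
    hconv.comp_affineMap (lineMap x y)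
  have := hline.le_slope_of_hasDerivAt (mem_univ 0) (mem_univ 1) zero_lt_one
    (hasDerivAt_comp_lineMap (by simpa using hF))
  simp only [slope_def_field, lineMap_apply_zero, lineMap_apply_one, sub_zero, div_one] at this
  linarith

end Gradient

theorem exists_eq_zero_mul_dist_le {X : Type*} [MetricSpace X] [ProperSpace X] {g : X → ℝ}
    (hg : Continuous g) (hg0 : ∀ u, 0 ≤ g u) {c : ℝ} (hc : 0 < c)
    (hslope : ∀ v, 0 < g v → ¬ ∀ᶠ u in 𝓝 v, g v - c * dist u v ≤ g u) (w : X) :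
    ∃ v, g v = 0 ∧ c * dist w v ≤ g w := by
  obtain ⟨v, -, hvmin⟩ := (isCompact_closedBall w (g w / c)).exists_isMinOn
    ⟨w, Metric.mem_closedBall_self (by have := hg0 w; positivity)⟩
    (f := fun u => g u + c * dist u w) (by fun_prop)
  have hvw : g v + c * dist v w ≤ g w := by
    simpa using hvmin (Metric.mem_closedBall_self (by have := hg0 w; positivity))
  refine ⟨v, ?_, by rw [dist_comm]; linarith [hg0 v]⟩
  by_contra hv
  have hpos : 0 < g v := (hg0 v).lt_of_ne' hv
  refine hslope v hpos ?_
  have hvint : v ∈ Metric.ball w (g w / c) := by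
    rw [Metric.mem_ball, lt_div_iff₀ hc]
    linarith
  filter_upwards [Metric.isOpen_ball.mem_nhds hvint] with u hu
  have hvu : g v + c * dist v w ≤ g u + c * dist u w :=
    hvmin (Metric.ball_subset_closedBall hu)
  nlinarith [dist_triangle u v w]

theorem sq_sub_two_mul_mul_le_of_sub_le_sqrt {x s t : ℝ} (hx : 0 ≤ x) (hs : 0 ≤ s) (ht : 0 ≤ t)
    (h : s - t ≤ √x) : s ^ 2 - 2 * s * t ≤ x := by
  rcases le_total s t with hst | hst
  · nlinarith
  · have := pow_le_pow_left₀ (sub_nonneg.2 hst) h 2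
    rw [Real.sq_sqrt hx] at this
    nlinarith

section PolyakLojasiewicz

variable {E : Type*} [NormedAddCommGroup E] [InnerProductSpace ℝ E] [CompleteSpace E]
  {F : E → ℝ} {Fstar μ : ℝ}

theorem not_eventually_sqrt_sub_le_of_PL (hF : Differentiable ℝ F) (hFstar : ∀ v, Fstar ≤ F v)
    (hPL : ∀ w, F w - Fstar ≤ 1 / (2 * μ) * ‖gradient F w‖ ^ 2) {c : ℝ} (hc0 : 0 ≤ c)
    (hc : 2 * c ^ 2 < μ) {v : E} (hv : Fstar < F v) :
    ¬ ∀ᶠ u in 𝓝 v, √(F v - Fstar) - c * dist u v ≤ √(F u - Fstar) := by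
  intro hlow
  set s := √(F v - Fstar)
  have hs : 0 < s := Real.sqrt_pos.2 (sub_pos.2 hv)
  have hs2 : s ^ 2 = F v - Fstar := Real.sq_sqrt (sub_nonneg.2 (hFstar v))
  have hgrad : ‖gradient F v‖ ≤ 2 * c * s := by
    refine norm_gradient_le_of_eventually_le (hF v) (by positivity) (hlow.mono fun u hu => ?_)
    rw [dist_eq_norm] at hu
    have := sq_sub_two_mul_mul_le_of_sub_le_sqrt (sub_nonneg.2 (hFstar u)) hs.le
      (by positivity) hu
    linarith
  have hμ : 0 < μ := by nlinarith
  have hPLv : 2 * μ * s ^ 2 ≤ ‖gradient F v‖ ^ 2 := by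
    have := hPL v
    rw [one_div_mul_eq_div, le_div_iff₀ (by positivity), ← hs2] at this
    linarith
  have := pow_le_pow_left₀ (norm_nonneg _) hgrad 2
  nlinarith

theorem quadGrowth_of_PL [ProperSpace E] (hF : Differentiable ℝ F) (hFstar : ∀ v, Fstar ≤ F v)
    (hμ : 0 < μ) (hPL : ∀ w, F w - Fstar ≤ 1 / (2 * μ) * ‖gradient F w‖ ^ 2) {w p : E}
    (hp : ∀ v, F v = Fstar → ‖w - p‖ ≤ ‖w - v‖) :
    μ / 2 * ‖w - p‖ ^ 2 ≤ F w - Fstar := by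
  set g := fun u => √(F u - Fstar)
  have hg : Continuous g := Real.continuous_sqrt.comp (hF.continuous.sub continuous_const)
  have hbound : ∀ c ∈ Ioo 0 √(μ / 2), c * ‖w - p‖ ≤ g w := by
    rintro c ⟨hc0, hc⟩
    have hc2 : 2 * c ^ 2 < μ := by linarith [(Real.lt_sqrt hc0.le).1 hc]
    obtain ⟨v, hv0, hv⟩ := exists_eq_zero_mul_dist_le hg (fun u => Real.sqrt_nonneg _) hc0
      (fun v hv => not_eventually_sqrt_sub_le_of_PL hF hFstar hPL hc0.le hc2
        (sub_pos.1 (Real.sqrt_pos.1 hv))) w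
    have hFv : F v = Fstar :=
      le_antisymm (sub_nonpos.1 (Real.sqrt_eq_zero'.1 hv0)) (hFstar v)
    calc c * ‖w - p‖ ≤ c * ‖w - v‖ := by gcongr; exact hp v hFv
      _ ≤ g w := by rwa [← dist_eq_norm]
  have hlim : √(μ / 2) * ‖w - p‖ ≤ g w :=
    le_of_tendsto ((continuous_mul_const _).tendsto _ |>.mono_left nhdsWithin_le_nhds)
      (eventually_of_mem (Ioo_mem_nhdsLT (by positivity)) hbound)
  calc μ / 2 * ‖w - p‖ ^ 2 = (√(μ / 2) * ‖w - p‖) ^ 2 := by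
        rw [mul_pow, Real.sq_sqrt (by positivity)]
    _ ≤ g w ^ 2 := pow_le_pow_left₀ (by positivity) hlim 2
    _ = F w - Fstar := Real.sq_sqrt (sub_nonneg.2 (hFstar w))

theorem mul_norm_le_norm_gradient_of_quadGrowth_of_PL (hμ : 0 < μ) {w p : E}
    (hqg : μ / 2 * ‖w - p‖ ^ 2 ≤ F w - Fstar)
    (hPL : F w - Fstar ≤ 1 / (2 * μ) * ‖gradient F w‖ ^ 2) :
    μ * ‖w - p‖ ≤ ‖gradient F w‖ := by
  have h := hqg.trans hPL
  rw [one_div_mul_eq_div, le_div_iff₀ (by positivity)] at h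
  exact (pow_le_pow_iff_left₀ (by positivity) (norm_nonneg _) two_ne_zero).1 (by nlinarith)

theorem sub_le_of_errorBound {β : ℝ} (hF : Differentiable ℝ F)
    (hsmooth : ∀ w₁ w₂, ‖gradient F w₁ - gradient F w₂‖ ≤ β * ‖w₁ - w₂‖) (hβ : 0 ≤ β)
    (hμ : 0 < μ) {p w : E} (hp : ∀ v, F p ≤ F v) (heb : μ * ‖w - p‖ ≤ ‖gradient F w‖) :
    F w - F p ≤ β / (2 * μ ^ 2) * ‖gradient F w‖ ^ 2 := by
  have hdescent := apply_le_add_inner_gradient_add_sq_norm hF hsmooth p w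
  rw [IsLocalMin.gradient_eq_zero (Eventually.of_forall hp), inner_zero_left, add_zero]
    at hdescent
  calc F w - F p ≤ β / 2 * ‖w - p‖ ^ 2 := by linarith
    _ = β / (2 * μ ^ 2) * (μ * ‖w - p‖) ^ 2 := by field_simp
    _ ≤ β / (2 * μ ^ 2) * ‖gradient F w‖ ^ 2 := by gcongr

theorem sub_le_of_convex_of_quadGrowth (hconv : ConvexOn ℝ univ F) (hμ : 0 < μ) {p w : E}
    (hF : DifferentiableAt ℝ F w) (hqg : μ / 2 * ‖w - p‖ ^ 2 ≤ F w - F p) :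
    F w - F p ≤ 2 / μ * ‖gradient F w‖ ^ 2 := by
  have hfirst := hconv.add_inner_gradient_le hF p
  have hcs : -(‖gradient F w‖ * ‖w - p‖) ≤ inner ℝ (gradient F w) (p - w) := by
    rw [norm_sub_rev]
    exact neg_le_of_abs_le (abs_real_inner_le_norm _ _)
  rw [div_mul_eq_mul_div, le_div_iff₀ hμ]
  -- AM-GM: `μ ‖∇F w‖ ‖w - p‖ ≤ ‖∇F w‖² + μ² ‖w - p‖² / 4`
  nlinarith [sq_nonneg (‖gradient F w‖ - μ * ‖w - p‖ / 2)]

end PolyakLojasiewicz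

theorem statement18_general {d : ℕ} (F : Vec d → ℝ) (β : ℝ) (hβ : 0 < β)
    (hdiff : Differentiable ℝ F)
    (hsmooth : ∀ w₁ w₂, ‖gradient F w₁ - gradient F w₂‖ ≤ β * ‖w₁ - w₂‖)
    (Wstar : Set (Vec d)) (hWstar : Wstar = {w | ∀ v, F w ≤ F v})
    (Fstar : ℝ) (hFstar : Fstar = ⨅ w, F w)
    (proj : Vec d → Vec d)
    (hproj : ∀ w, proj w ∈ Wstar ∧ ∀ q ∈ Wstar, ‖w - proj w‖ ≤ ‖w - q‖)
    (μ : ℝ) (hμ : 0 < μ) :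
    ((∀ w₁ w₂, F w₁ - F w₂ ≥
        (inner ℝ (gradient F w₂) (w₁ - w₂) : ℝ) + μ / 2 * ‖w₁ - w₂‖ ^ 2) →
      ∀ w, Fstar - F w ≥
        (inner ℝ (gradient F w) (proj w - w) : ℝ) + μ / 2 * ‖proj w - w‖ ^ 2) ∧
    ((∀ w, Fstar - F w ≥
        (inner ℝ (gradient F w) (proj w - w) : ℝ) + μ / 2 * ‖proj w - w‖ ^ 2) →
      ∀ w, (inner ℝ (gradient F w) (w - proj w) : ℝ) ≥ μ / 2 * ‖w - proj w‖ ^ 2) ∧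
    ((∀ w, (inner ℝ (gradient F w) (w - proj w) : ℝ) ≥ μ * ‖w - proj w‖ ^ 2) →
      ∀ w, ‖gradient F w‖ ≥ μ * ‖w - proj w‖) ∧
    ((∀ w, ‖gradient F w‖ ≥ μ * ‖w - proj w‖) →
      ∀ w, F w - Fstar ≤ β / (2 * μ ^ 2) * ‖gradient F w‖ ^ 2) ∧
    ((∀ w, F w - Fstar ≤ 1 / (2 * μ) * ‖gradient F w‖ ^ 2) →
      (∀ w, F w - Fstar ≥ μ / 2 * ‖w - proj w‖ ^ 2) ∧
      (∀ w, ‖gradient F w‖ ≥ μ * ‖w - proj w‖)) ∧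
    ((ConvexOn ℝ Set.univ F ∧ ∀ w, F w - Fstar ≥ μ / 2 * ‖w - proj w‖ ^ 2) →
      ∀ w, F w - Fstar ≤ 2 / μ * ‖gradient F w‖ ^ 2) := by
  have hmin (w : Vec d) : ∀ v, F (proj w) ≤ F v := by simpa [hWstar] using (hproj w).1
  have hFproj (w : Vec d) : F (proj w) = Fstar :=
    hFstar ▸ (ciInf_eq_of_forall_ge_of_forall_gt_exists_lt (hmin w)
      fun _ h => ⟨proj w, h⟩).symm
  have hFstar_le (v : Vec d) : Fstar ≤ F v := hFproj v ▸ hmin v v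
  have hnearest (w v : Vec d) (hv : F v = Fstar) : ‖w - proj w‖ ≤ ‖w - v‖ :=
    (hproj w).2 v (by simpa [hWstar, hv] using hFstar_le)
  refine ⟨fun hsc w => hFproj w ▸ hsc (proj w) w, fun hwsc w => ?_,
    fun hrsi w => mul_norm_le_norm_of_mul_sq_le_inner (hrsi w),
    fun heb w => hFproj w ▸ sub_le_of_errorBound hdiff hsmooth hβ.le hμ (hmin w) (heb w),
    fun hPL => ?_, fun ⟨hconv, hqg⟩ w => ?_⟩
  · have h := hwsc w
    rw [← neg_sub w, inner_neg_right, norm_neg] at h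
    linarith [hFstar_le w]
  · have hqg (w : Vec d) : F w - Fstar ≥ μ / 2 * ‖w - proj w‖ ^ 2 :=
      quadGrowth_of_PL hdiff hFstar_le hμ hPL (hnearest w)
    exact ⟨hqg, fun w => mul_norm_le_norm_gradient_of_quadGrowth_of_PL hμ (hqg w) (hPL w)⟩
  · have h := sub_le_of_convex_of_quadGrowth hconv hμ (hdiff w) (hFproj w ▸ hqg w)
    rwa [hFproj w] at h

/-- Relations between curvature conditions: strong convexity ⇒ weak
strong convexity ⇒ restricted secant inequality ⇒ error bound ⇔ PL ⇒ quadratic growth, and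
for convex functions quadratic growth ⇒ PL. -/
theorem statement18 {d : ℕ} (F : Vec d → ℝ) (β : ℝ) (hβ : 0 < β)
    (hdiff : Differentiable ℝ F)
    (hsmooth : ∀ w₁ w₂, ‖gradient F w₁ - gradient F w₂‖ ≤ β * ‖w₁ - w₂‖)
    (Wstar : Set (Vec d)) (hWstar : Wstar = {w | ∀ v, F w ≤ F v})
    (hne : Wstar.Nonempty) (hcl : IsClosed Wstar)
    (Fstar : ℝ) (hFstar : Fstar = ⨅ w, F w)
    (proj : Vec d → Vec d)
    (hproj : ∀ w, proj w ∈ Wstar ∧ ∀ q ∈ Wstar, ‖w - proj w‖ ≤ ‖w - q‖)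
    (μ : ℝ) (hμ : 0 < μ) :
    ((∀ w₁ w₂, F w₁ - F w₂ ≥
        (inner ℝ (gradient F w₂) (w₁ - w₂) : ℝ) + μ / 2 * ‖w₁ - w₂‖ ^ 2) →
      ∀ w, Fstar - F w ≥
        (inner ℝ (gradient F w) (proj w - w) : ℝ) + μ / 2 * ‖proj w - w‖ ^ 2) ∧
    ((∀ w, Fstar - F w ≥
        (inner ℝ (gradient F w) (proj w - w) : ℝ) + μ / 2 * ‖proj w - w‖ ^ 2) →
      ∀ w, (inner ℝ (gradient F w) (w - proj w) : ℝ) ≥ μ / 2 * ‖w - proj w‖ ^ 2) ∧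
    ((∀ w, (inner ℝ (gradient F w) (w - proj w) : ℝ) ≥ μ * ‖w - proj w‖ ^ 2) →
      ∀ w, ‖gradient F w‖ ≥ μ * ‖w - proj w‖) ∧
    ((∀ w, ‖gradient F w‖ ≥ μ * ‖w - proj w‖) →
      ∀ w, F w - Fstar ≤ β / (2 * μ ^ 2) * ‖gradient F w‖ ^ 2) ∧
    ((∀ w, F w - Fstar ≤ 1 / (2 * μ) * ‖gradient F w‖ ^ 2) →
      (∀ w, F w - Fstar ≥ μ / 2 * ‖w - proj w‖ ^ 2) ∧
      (∀ w, ‖gradient F w‖ ≥ μ * ‖w - proj w‖)) ∧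
    ((ConvexOn ℝ Set.univ F ∧ ∀ w, F w - Fstar ≥ μ / 2 * ‖w - proj w‖ ^ 2) →
      ∀ w, F w - Fstar ≤ 2 / μ * ‖gradient F w‖ ^ 2) :=
  statement18_general F β hβ hdiff hsmooth Wstar hWstar Fstar hFstar proj hproj μ hμ
end
end
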